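/- For any positive integer k, the set of zeros of T_k in the algebraic closure of GF(2) equals { x + x^2 : x ∈ GF(2^k) }. -/
import Mathlib


/-- `T l k x = ∑_{i=0}^{k/l - 1} x^(2^(l*i))`, the linearized trace-like polynomial. -/
noncomputable def T {F : Type*} [Field F] (l k : ℕ) (x : F) : F :=
  ∑ i ∈ Finset.range (k / l), x ^ (2 ^ (l * i))

open Polynomial Finset

local notation "F2" => AlgebraicClosure (ZMod 2)

lemma T_one' (k : ℕ) (x : F2) : T 1 k x = ∑ i ∈ Finset.range k, x ^ (2 ^ i) := by
  simp [T]

lemma telescope' (k : ℕ) (x : F2) :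
    ∑ i ∈ Finset.range k, (x + x ^ 2) ^ (2 ^ i) = x ^ (2 ^ k) - x := by
  have h : ∀ i, (x + x ^ 2) ^ (2 ^ i) = x ^ (2 ^ (i + 1)) - x ^ (2 ^ i) := by
    intro i
    rw [add_pow_char_pow, ← pow_mul, CharTwo.sub_eq_add, add_comm, pow_succ, mul_comm]
  rw [Finset.sum_congr rfl fun i _ => h i, Finset.sum_range_sub (fun i => x ^ (2 ^ i))]
  simp

theorem stmt_11 (k : ℕ) (hk : 0 < k) :
    {x : AlgebraicClosure (ZMod 2) | T 1 k x = 0} =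
      (fun x : AlgebraicClosure (ZMod 2) => x + x ^ 2) ''
        {x : AlgebraicClosure (ZMod 2) | x ^ (2 ^ k) = x} := by
  classical
  set f : F2 → F2 := fun x => x + x ^ 2 with hf
  set p : F2[X] := X ^ 2 ^ k - X with hp
  set q : F2[X] := ∑ i ∈ Finset.range k, X ^ (2 ^ i) with hq
  have hpne : p ≠ 0 := FiniteField.X_pow_card_pow_sub_X_ne_zero F2 hk.ne' one_lt_two
  -- membership in roots of p
  have hAmem : ∀ x : F2, x ∈ p.roots.toFinset ↔ x ^ 2 ^ k = x := by
    intro x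
    rw [Multiset.mem_toFinset, mem_roots hpne, IsRoot.def, hp]
    simp [sub_eq_zero]
  -- eval q
  have hqeval : ∀ x : F2, q.eval x = T 1 k x := by
    intro x
    rw [T_one', hq, eval_finset_sum]
    simp
  have hqne : q ≠ 0 := by
    intro h
    have h1 : q.coeff 1 = 1 := by
      rw [hq, finset_sum_coeff]
      rw [Finset.sum_eq_single 0]
      · simp
      · intro i _ hi
        rw [coeff_X_pow, if_neg]
        intro h2
        apply hi
        by_contra h3
        exact absurd h2.symm (Nat.one_lt_two_pow_iff.mpr h3).ne'
      · intro h0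
        exact absurd (Finset.mem_range.mpr hk) h0
    rw [h] at h1
    simp at h1
  have hZmem : ∀ x : F2, x ∈ q.roots.toFinset ↔ T 1 k x = 0 := by
    intro x
    rw [Multiset.mem_toFinset, mem_roots hqne, IsRoot.def, hqeval]
  -- card of A
  have hdeg : p.natDegree = 2 ^ k :=
    FiniteField.X_pow_card_pow_sub_X_natDegree_eq F2 hk.ne' one_lt_two
  have hsep : p.Separable := galois_poly_separable 2 (2 ^ k) (dvd_pow_self 2 hk.ne')
  have hAcard : p.roots.toFinset.card = 2 ^ k := by
    rw [Multiset.toFinset_card_eq_card_iff_nodup.mpr (nodup_roots hsep), ← hdeg]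
    exact splits_iff_card_roots.mp (IsAlgClosed.splits p)
  -- card of Z
  have hZcard : q.roots.toFinset.card ≤ 2 ^ (k - 1) := by
    calc q.roots.toFinset.card ≤ Multiset.card q.roots := Multiset.toFinset_card_le _
    _ ≤ q.natDegree := q.card_roots'
    _ ≤ 2 ^ (k - 1) := by
        apply natDegree_sum_le_of_forall_le
        intro i hi
        rw [natDegree_X_pow]
        have := Finset.mem_range.mp hi
        exact Nat.pow_le_pow_right (by norm_num) (by omega)
  -- image finset
  set B : Finset F2 := p.roots.toFinset.image f with hB
  have hBsub : B ⊆ q.roots.toFinset := by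
    intro y hy
    rw [Finset.mem_image] at hy
    obtain ⟨x, hx, rfl⟩ := hy
    rw [hZmem, T_one', hf, telescope', (hAmem x).mp hx, sub_self]
  have hfiber : ∀ a ∈ B, (p.roots.toFinset.filter fun x => f x = a).card ≤ 2 := by
    intro a ha
    rw [hB, Finset.mem_image] at ha
    obtain ⟨y, hy, rfl⟩ := ha
    calc (p.roots.toFinset.filter fun x => f x = f y).card
        ≤ ({y, y + 1} : Finset F2).card := by
          apply Finset.card_le_card
          intro x hx
          rw [Finset.mem_filter] at hx
          have h2 : (2 : F2) = 0 := CharTwo.two_eq_zero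
          have heq : x + x ^ 2 = y + y ^ 2 := hx.2
          have h1 : (x + y) + (x + y) ^ 2 = 0 := by
            linear_combination heq + (y + y ^ 2 + x * y) * h2
          have h4 : (x + y) * (1 + (x + y)) = 0 := by linear_combination h1
          rcases mul_eq_zero.mp h4 with h3 | h3
          · have hxy : x = y := by
              rw [← CharTwo.sub_eq_add] at h3
              exact sub_eq_zero.mp h3
            simp [hxy]
          · have hxy : x + y = 1 := by
              rw [← CharTwo.sub_eq_add] at h3
              exact (sub_eq_zero.mp h3).symm
            have hx1 : x = y + 1 := by linear_combination hxy - y * h2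
            simp [hx1]
        _ ≤ 2 := Finset.card_insert_le _ _
  have hcard2 : 2 ^ k ≤ 2 * B.card := by
    rw [← hAcard]
    exact Finset.card_le_mul_card_image _ 2 hfiber
  have hBcard : 2 ^ (k - 1) ≤ B.card := by
    have h2 : 2 ^ k = 2 * 2 ^ (k - 1) := by
      rw [← pow_succ']
      congr 1
      omega
    omega
  have hBZ : B = q.roots.toFinset :=
    Finset.eq_of_subset_of_card_le hBsub (le_trans hZcard (by omega))
  ext y
  constructor
  · intro hy
    have : y ∈ q.roots.toFinset := (hZmem y).mpr hy
    rw [← hBZ, hB, Finset.mem_image] at this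
    obtain ⟨x, hx, rfl⟩ := this
    exact ⟨x, (hAmem x).mp hx, rfl⟩
  · rintro ⟨x, hx, rfl⟩
    show T 1 k (f x) = 0
    rw [T_one', hf, telescope', hx, sub_self]
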